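/- For n ≥ 2, F(A_{n+1}, f_{2n} − f_{2n−3}) = F(A_{n+2}, f_{2n} − f_{2n−3}); that is, the set of sub-words of length f_{2n} − f_{2n−3} of words in A_{n+1} equals the set of sub-words of that length of words in A_{n+2}. -/

import Mathlib

/-- The two-letter alphabet. -/
inductive Letter : Type
  | a : Letter
  | b : Letter
deriving DecidableEq

/-- A word is a finite sequence of letters. -/
abbrev Word := List Letter

/-- Concatenation set `UV = {uv : u ∈ U, v ∈ V}`. -/
def concatSet (U V : Set Word) : Set Word := {w | ∃ u ∈ U, ∃ v ∈ V, w = u ++ v}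

mutual
  /-- The sets `A_n` of inflated words (indexed so that `Aset 1 = {a}`). -/
  def Aset : ℕ → Set Word
    | 0 => ∅
    | 1 => {[Letter.a]}
    | n + 2 => concatSet (Bset (n + 1)) (concatSet (Aset (n + 1)) (Aset (n + 1)))
  /-- The sets `B_n` of inflated words (indexed so that `Bset 1 = {b}`). -/
  def Bset : ℕ → Set Word
    | 0 => ∅
    | 1 => {[Letter.b]}
    | n + 2 => concatSet (Aset (n + 1)) (Bset (n + 1)) ∪ concatSet (Bset (n + 1)) (Aset (n + 1))
end

/-- The sub-word `w[a,b] = w_a w_{a+1} … w_b` (1-indexed). -/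
def wordSlice (w : Word) (i j : ℕ) : Word := (w.drop (i - 1)).take (j - i + 1)

/-- `W[a,b] = {w[a,b] : w ∈ W}`. -/
def setSlice (W : Set Word) (i j : ℕ) : Set Word := {x | ∃ w ∈ W, x = wordSlice w i j}

/-- `x` is a sub-word (contiguous factor) of `w`. -/
def IsFactor (x w : Word) : Prop := ∃ u v : Word, w = u ++ x ++ v

/-- `F(S, m)`: the set of all sub-words of length `m` of words in `S`. -/
def FactorSet (S : Set Word) (m : ℕ) : Set Word :=
  {x | x.length = m ∧ ∃ w ∈ S, IsFactor x w}

/-- `F(A, m) = ⋃_{n ≥ 1} F(A_n, m)`. -/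
def FA (m : ℕ) : Set Word := ⋃ n ∈ {n : ℕ | 1 ≤ n}, FactorSet (Aset n) m

/-- `F(B, m) = ⋃_{n ≥ 1} F(B_n, m)`. -/
def FB (m : ℕ) : Set Word := ⋃ n ∈ {n : ℕ | 1 ≤ n}, FactorSet (Bset n) m

/-- The golden mean `τ = (1 + √5)/2`. -/
noncomputable def tau : ℝ := (1 + Real.sqrt 5) / 2

/-!
Write `A`, `B` for the blocks `A_{n+1}`, `B_{n+1}`, of lengths `f_{2n+2}`, `f_{2n+1}`. The
choices in `A_{k+1} = B_k A_k A_k` and `B_{k+1} = A_k B_k ∪ B_k A_k` are made independently, so the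
words of `A_{n+3}` are the inflations of the patterns `abbaabaa` and `babaabaa`: each letter is
replaced by an arbitrary block of its type. An inflation of any factor of these two patterns
therefore occurs in `A_{n+3}`.

After the shift `n ↦ n + 2` the length in the theorem is `2 f_{2n+2}`, and the nontrivial
inclusion says that a factor `x` of that length of a word of `A_{n+4} = B_{n+3} A_{n+3} A_{n+3}`
occurs in `A_{n+3}`. Cut along the blocks, `x` lies in an inflated legal pattern unless it meets
`aaa` or `abab`, or strictly contains a word of `B_{n+2}`. In those cases the incomplete end
blocks of `x` are short, and a short prefix or suffix can be re-read in a block of the other type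
(a prefix of a `B` shorter than `f_{2n}` is a prefix of an `A`, a prefix of an `A` shorter than
`f_{2n+1}` is one of a `B`, a suffix of an `A` of length at most `f_{2n}` is one of a `B`). This
turns the pattern into a legal one.
-/

open List

lemma List.exists_eq_append_of_prefix_append {α : Type*} {t m v : List α} (h : t <+: m ++ v)
    (hlen : m.length ≤ t.length) : ∃ t₀, t = m ++ t₀ ∧ t₀ <+: v := by
  obtain ⟨t₀, rfl⟩ := prefix_of_prefix_length_le (prefix_append m v) h hlen
  exact ⟨t₀, rfl, (prefix_append_right_inj m).1 h⟩

lemma List.exists_eq_append_of_suffix_append {α : Type*} {t u m : List α} (h : t <:+ u ++ m)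
    (hlen : m.length ≤ t.length) : ∃ t₀, t = t₀ ++ m ∧ t₀ <:+ u := by
  obtain ⟨t₀, rfl⟩ := suffix_of_suffix_length_le (suffix_append u m) h hlen
  exact ⟨t₀, rfl, suffix_append_self_iff.1 h⟩

lemma List.IsSuffix.append_infix {α : Type*} {t t' u m v : List α} (ht : t <:+ u)
    (ht' : t' <+: v) : t ++ m ++ t' <:+: u ++ m ++ v := by
  obtain ⟨l, rfl⟩ := ht
  obtain ⟨r, rfl⟩ := ht'
  exact ⟨l, r, by simp⟩

def Factors (S : Set Word) : Set Word := {x | ∃ w ∈ S, x <:+: w}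

lemma isFactor_iff_infix {x w : Word} : IsFactor x w ↔ x <:+: w :=
  ⟨fun ⟨u, v, h⟩ => ⟨u, v, h.symm⟩, fun ⟨u, v, h⟩ => ⟨u, v, h.symm⟩⟩

lemma factorSet_eq (S : Set Word) (m : ℕ) :
    FactorSet S m = {x | x.length = m ∧ x ∈ Factors S} := by
  ext x
  simp only [FactorSet, Factors, Set.mem_ofPred_eq, isFactor_iff_infix]

section Structure

variable {n : ℕ}

lemma append_mem_Aset {c a₁ a₂ : Word} (hc : c ∈ Bset (n + 1)) (ha₁ : a₁ ∈ Aset (n + 1))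
    (ha₂ : a₂ ∈ Aset (n + 1)) : c ++ (a₁ ++ a₂) ∈ Aset (n + 2) :=
  ⟨c, hc, a₁ ++ a₂, ⟨a₁, ha₁, a₂, ha₂, rfl⟩, rfl⟩

lemma append_mem_Bset_of_Aset_Bset {a c : Word} (ha : a ∈ Aset (n + 1))
    (hc : c ∈ Bset (n + 1)) : a ++ c ∈ Bset (n + 2) :=
  Or.inl ⟨a, ha, c, hc, rfl⟩

lemma append_mem_Bset_of_Bset_Aset {c a : Word} (hc : c ∈ Bset (n + 1))
    (ha : a ∈ Aset (n + 1)) : c ++ a ∈ Bset (n + 2) :=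
  Or.inr ⟨c, hc, a, ha, rfl⟩

lemma mem_Aset_add_two {w : Word} :
    w ∈ Aset (n + 2) ↔
      ∃ c ∈ Bset (n + 1), ∃ a₁ ∈ Aset (n + 1), ∃ a₂ ∈ Aset (n + 1), w = c ++ (a₁ ++ a₂) := by
  constructor
  · rintro ⟨c, hc, _, ⟨a₁, ha₁, a₂, ha₂, rfl⟩, rfl⟩
    exact ⟨c, hc, a₁, ha₁, a₂, ha₂, rfl⟩
  · rintro ⟨c, hc, a₁, ha₁, a₂, ha₂, rfl⟩
    exact append_mem_Aset hc ha₁ ha₂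

lemma mem_Bset_add_two {w : Word} :
    w ∈ Bset (n + 2) ↔
      (∃ a ∈ Aset (n + 1), ∃ c ∈ Bset (n + 1), w = a ++ c) ∨
        ∃ c ∈ Bset (n + 1), ∃ a ∈ Aset (n + 1), w = c ++ a := by
  constructor
  · rintro (⟨a, ha, c, hc, rfl⟩ | ⟨c, hc, a, ha, rfl⟩)
    · exact Or.inl ⟨a, ha, c, hc, rfl⟩
    · exact Or.inr ⟨c, hc, a, ha, rfl⟩
  · rintro (⟨a, ha, c, hc, rfl⟩ | ⟨c, hc, a, ha, rfl⟩)
    · exact append_mem_Bset_of_Aset_Bset ha hc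
    · exact append_mem_Bset_of_Bset_Aset hc ha

lemma length_of_mem_Aset_and_Bset (n : ℕ) :
    (∀ w ∈ Aset (n + 1), w.length = Nat.fib (2 * n + 2)) ∧
      ∀ w ∈ Bset (n + 1), w.length = Nat.fib (2 * n + 1) := by
  induction n with
  | zero => exact ⟨by rintro w rfl; rfl, by rintro w rfl; rfl⟩
  | succ n ih =>
    have h₃ : Nat.fib (2 * n + 3) = Nat.fib (2 * n + 1) + Nat.fib (2 * n + 2) := Nat.fib_add_two
    have h₄ : Nat.fib (2 * n + 4) = Nat.fib (2 * n + 2) + Nat.fib (2 * n + 3) := Nat.fib_add_two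
    refine ⟨fun w hw => ?_, fun w hw => ?_⟩
    · obtain ⟨c, hc, a₁, ha₁, a₂, ha₂, rfl⟩ := mem_Aset_add_two.1 hw
      show _ = Nat.fib (2 * n + 4)
      simp only [length_append, ih.1 _ ha₁, ih.1 _ ha₂, ih.2 _ hc]
      omega
    · rcases mem_Bset_add_two.1 hw with ⟨a, ha, c, hc, rfl⟩ | ⟨c, hc, a, ha, rfl⟩ <;>
      · show _ = Nat.fib (2 * n + 3)
        simp only [length_append, ih.1 _ ha, ih.2 _ hc]
        omega

lemma length_of_mem_Aset {w : Word} (hw : w ∈ Aset (n + 1)) :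
    w.length = Nat.fib (2 * n + 2) :=
  (length_of_mem_Aset_and_Bset n).1 w hw

lemma length_of_mem_Bset {w : Word} (hw : w ∈ Bset (n + 1)) :
    w.length = Nat.fib (2 * n + 1) :=
  (length_of_mem_Aset_and_Bset n).2 w hw

lemma length_of_mem_Aset_add_two {w : Word} (hw : w ∈ Aset (n + 2)) :
    w.length = Nat.fib (2 * n + 1) + 2 * Nat.fib (2 * n + 2) := by
  obtain ⟨c, hc, a₁, ha₁, a₂, ha₂, rfl⟩ := mem_Aset_add_two.1 hw
  simp only [length_append, length_of_mem_Aset ha₁, length_of_mem_Aset ha₂,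
    length_of_mem_Bset hc]
  ring

lemma length_of_mem_Bset_add_two {w : Word} (hw : w ∈ Bset (n + 2)) :
    w.length = Nat.fib (2 * n + 1) + Nat.fib (2 * n + 2) := by
  rcases mem_Bset_add_two.1 hw with ⟨a, ha, c, hc, rfl⟩ | ⟨c, hc, a, ha, rfl⟩ <;>
    simp only [length_append, length_of_mem_Aset ha, length_of_mem_Bset hc, Nat.add_comm]

lemma Aset_nonempty_and_Bset_nonempty (n : ℕ) :
    (Aset (n + 1)).Nonempty ∧ (Bset (n + 1)).Nonempty := by
  induction n with
  | zero => exact ⟨⟨[.a], rfl⟩, ⟨[.b], rfl⟩⟩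
  | succ n ih =>
    obtain ⟨⟨a, ha⟩, ⟨c, hc⟩⟩ := ih
    exact ⟨⟨_, append_mem_Aset hc ha ha⟩, ⟨_, append_mem_Bset_of_Aset_Bset ha hc⟩⟩

lemma Aset_nonempty (n : ℕ) : (Aset (n + 1)).Nonempty := (Aset_nonempty_and_Bset_nonempty n).1

lemma Bset_nonempty (n : ℕ) : (Bset (n + 1)).Nonempty := (Aset_nonempty_and_Bset_nonempty n).2

lemma factors_Aset_subset_succ (n : ℕ) : Factors (Aset (n + 1)) ⊆ Factors (Aset (n + 2)) := by
  rintro x ⟨w, hw, hx⟩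
  obtain ⟨c, hc⟩ := Bset_nonempty n
  exact ⟨_, append_mem_Aset hc hw hw, hx.trans (infix_append' c w w)⟩

end Structure

section Patterns

def block (n : ℕ) : Letter → Set Word
  | .a => Aset (n + 1)
  | .b => Bset (n + 1)

def IsInflation (n : ℕ) (ws : List Word) (y : List Letter) : Prop :=
  Forall₂ (fun w l => w ∈ block n l) ws y

variable {n : ℕ}

lemma block_nonempty (n : ℕ) : ∀ l, (block n l).Nonempty
  | .a => Aset_nonempty n
  | .b => Bset_nonempty n

lemma exists_isInflation (n : ℕ) : ∀ y : List Letter, ∃ ws, IsInflation n ws y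
  | [] => ⟨[], .nil⟩
  | l :: y =>
    let ⟨ws, h⟩ := exists_isInflation n y
    ⟨(block_nonempty n l).some :: ws, .cons (block_nonempty n l).some_mem h⟩

lemma flatten_mem_Aset_of_isInflation {ws : List Word} {y : List Letter}
    (hy : y = [.a, .b, .b, .a, .a, .b, .a, .a] ∨ y = [.b, .a, .b, .a, .a, .b, .a, .a])
    (h : IsInflation n ws y) : ws.flatten ∈ Aset (n + 3) := by
  rcases hy with rfl | rfl <;>
    rcases h with
      _ | ⟨h₁, _ | ⟨h₂, _ | ⟨h₃, _ | ⟨h₄, _ | ⟨h₅, _ | ⟨h₆, _ | ⟨h₇, _ | ⟨h₈, _ | _⟩⟩⟩⟩⟩⟩⟩⟩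
  · simpa using append_mem_Aset (append_mem_Bset_of_Aset_Bset h₁ h₂)
      (append_mem_Aset h₃ h₄ h₅) (append_mem_Aset h₆ h₇ h₈)
  · simpa using append_mem_Aset (append_mem_Bset_of_Bset_Aset h₁ h₂)
      (append_mem_Aset h₃ h₄ h₅) (append_mem_Aset h₆ h₇ h₈)

lemma mem_factors_Aset_of_isInflation {x : Word} {ws : List Word} (y : List Letter)
    (hy : y <:+: [.a, .b, .b, .a, .a, .b, .a, .a] ∨ y <:+: [.b, .a, .b, .a, .a, .b, .a, .a])
    (h : IsInflation n ws y) (hx : x <:+: ws.flatten) : x ∈ Factors (Aset (n + 3)) := by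
  obtain ⟨z, hz, y₁, y₂, rfl⟩ : ∃ z, (z = [.a, .b, .b, .a, .a, .b, .a, .a] ∨
      z = [.b, .a, .b, .a, .a, .b, .a, .a]) ∧ y <:+: z := by
    rcases hy with hy | hy
    exacts [⟨_, Or.inl rfl, hy⟩, ⟨_, Or.inr rfl, hy⟩]
  obtain ⟨ws₁, h₁⟩ := exists_isInflation n y₁
  obtain ⟨ws₂, h₂⟩ := exists_isInflation n y₂
  refine ⟨_, flatten_mem_Aset_of_isInflation hz (rel_append (rel_append h₁ h) h₂), ?_⟩
  simpa using hx.trans (infix_append ws₁.flatten ws.flatten ws₂.flatten)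

end Patterns

section PrefixesSuffixes

variable {n : ℕ}

lemma exists_prefix_Aset_succ : ∀ {n : ℕ} {a t : Word}, a ∈ Aset (n + 1) → t <+: a →
    t.length < a.length → ∃ a' ∈ Aset (n + 2), t <+: a'
  | 0, a, t, ha, _, hlen => by
    obtain ⟨a', ha'⟩ := Aset_nonempty 1
    rw [length_of_mem_Aset ha] at hlen
    exact ⟨a', ha', by simp_all⟩
  | n + 1, _, t, ha, ht, hlen => by
    obtain ⟨c, hc, a₁, ha₁, a₂, ha₂, rfl⟩ := mem_Aset_add_two.1 ha
    obtain ⟨w, hw⟩ := Aset_nonempty (n + 1)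
    have hca₁ := append_mem_Bset_of_Bset_Aset hc ha₁
    rw [← append_assoc] at ht hlen
    by_cases hshort : t.length ≤ (c ++ a₁).length
    · exact ⟨_, append_mem_Aset hca₁ hw hw,
        prefix_append_of_prefix (prefix_of_prefix_length_le ht (prefix_append _ _) hshort)⟩
    · obtain ⟨t₀, rfl, ht₀⟩ := exists_eq_append_of_prefix_append ht (by omega)
      obtain ⟨a', ha', ht₀a'⟩ := exists_prefix_Aset_succ ha₂ ht₀ (by simp at hlen; omega)
      exact ⟨_, append_mem_Aset hca₁ ha' hw,
        (prefix_append_right_inj _).2 (prefix_append_of_prefix ht₀a')⟩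

lemma exists_prefix_Aset_of_Bset {c t : Word} (hc : c ∈ Bset (n + 1)) (ht : t <+: c)
    (hlen : t.length < Nat.fib (2 * n)) : ∃ a ∈ Aset (n + 1), t <+: a := by
  cases n with
  | zero => simp at hlen
  | succ n =>
    rcases mem_Bset_add_two.1 hc with ⟨a₁, ha₁, c₁, hc₁, rfl⟩ | ⟨c₁, hc₁, a₁, ha₁, rfl⟩
    · have hlen' : t.length < a₁.length := by rw [length_of_mem_Aset ha₁]; exact hlen
      exact exists_prefix_Aset_succ ha₁
        (prefix_of_prefix_length_le ht (prefix_append _ _) hlen'.le) hlen'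
    · exact ⟨_, append_mem_Aset hc₁ ha₁ ha₁, ht.trans (by simp)⟩

lemma exists_prefix_Bset_of_Aset {a t : Word} (ha : a ∈ Aset (n + 1)) (ht : t <+: a)
    (hlen : t.length < Nat.fib (2 * n + 1)) : ∃ c ∈ Bset (n + 1), t <+: c := by
  cases n with
  | zero =>
    obtain ⟨c, hc⟩ := Bset_nonempty 0
    exact ⟨c, hc, by simp_all⟩
  | succ n =>
    obtain ⟨c₁, hc₁, a₁, ha₁, a₂, ha₂, rfl⟩ := mem_Aset_add_two.1 ha
    have : Nat.fib (2 * (n + 1) + 1) = Nat.fib (2 * n + 1) + Nat.fib (2 * n + 2) :=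
      Nat.fib_add_two
    rw [← append_assoc] at ht
    refine ⟨_, append_mem_Bset_of_Bset_Aset hc₁ ha₁,
      prefix_of_prefix_length_le ht (prefix_append _ _) ?_⟩
    simp only [length_append, length_of_mem_Aset ha₁, length_of_mem_Bset hc₁]
    omega

lemma exists_suffix_Bset_of_Aset {a t : Word} (ha : a ∈ Aset (n + 1)) (ht : t <:+ a)
    (hlen : t.length ≤ Nat.fib (2 * n)) : ∃ c ∈ Bset (n + 1), t <:+ c := by
  cases n with
  | zero =>
    obtain ⟨c, hc⟩ := Bset_nonempty 0
    exact ⟨c, hc, by simp_all⟩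
  | succ n =>
    obtain ⟨c₁, hc₁, a₁, ha₁, a₂, ha₂, rfl⟩ := mem_Aset_add_two.1 ha
    obtain ⟨c, hc⟩ := Bset_nonempty n
    refine ⟨_, append_mem_Bset_of_Bset_Aset hc ha₂, suffix_append_of_suffix
      (suffix_of_suffix_length_le ht (suffix_append_of_suffix (suffix_append _ _)) ?_)⟩
    rw [length_of_mem_Aset ha₂]
    exact hlen

lemma exists_block_suffix {P t : Word} (hP : P ∈ Aset (n + 2) ∪ Bset (n + 2)) (ht : t <:+ P)
    (hlen : t.length ≤ Nat.fib (2 * n + 1)) : ∃ l, ∃ w ∈ block n l, t <:+ w := by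
  have hmono : Nat.fib (2 * n + 1) ≤ Nat.fib (2 * n + 2) := Nat.fib_mono (by omega)
  rcases hP with hP | hP
  · obtain ⟨c, hc, a₁, ha₁, a₂, ha₂, rfl⟩ := mem_Aset_add_two.1 hP
    rw [← append_assoc] at ht
    exact ⟨.a, a₂, ha₂, suffix_of_suffix_length_le ht (suffix_append _ _)
      (by rw [length_of_mem_Aset ha₂]; omega)⟩
  · rcases mem_Bset_add_two.1 hP with ⟨a, ha, c, hc, rfl⟩ | ⟨c, hc, a, ha, rfl⟩
    · exact ⟨.b, c, hc, suffix_of_suffix_length_le ht (suffix_append _ _)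
        (by rw [length_of_mem_Bset hc]; omega)⟩
    · exact ⟨.a, a, ha, suffix_of_suffix_length_le ht (suffix_append _ _)
        (by rw [length_of_mem_Aset ha]; omega)⟩

lemma exists_prefix_Aset_of_mem_union {R t : Word} (hR : R ∈ Aset (n + 2) ∪ Bset (n + 2))
    (ht : t <+: R) (hlen : t.length < Nat.fib (2 * n)) : ∃ a ∈ Aset (n + 1), t <+: a := by
  have hmono : Nat.fib (2 * n) ≤ Nat.fib (2 * n + 1) := Nat.fib_mono (by omega)
  have hmono' : Nat.fib (2 * n) ≤ Nat.fib (2 * n + 2) := Nat.fib_mono (by omega)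
  rcases hR with hR | hR
  · obtain ⟨c, hc, a₁, ha₁, a₂, ha₂, rfl⟩ := mem_Aset_add_two.1 hR
    exact exists_prefix_Aset_of_Bset hc (prefix_of_prefix_length_le ht (prefix_append _ _)
      (by rw [length_of_mem_Bset hc]; omega)) hlen
  · rcases mem_Bset_add_two.1 hR with ⟨a, ha, c, hc, rfl⟩ | ⟨c, hc, a, ha, rfl⟩
    · exact ⟨a, ha, prefix_of_prefix_length_le ht (prefix_append _ _)
        (by rw [length_of_mem_Aset ha]; omega)⟩
    · exact exists_prefix_Aset_of_Bset hc (prefix_of_prefix_length_le ht (prefix_append _ _)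
        (by rw [length_of_mem_Bset hc]; omega)) hlen

end PrefixesSuffixes

section ShortFactors

variable {n : ℕ}

lemma suffix_append_Bset_append_prefix_mem_factors {P c R t t' : Word}
    (hP : P ∈ Aset (n + 2) ∪ Bset (n + 2)) (hc : c ∈ Bset (n + 2))
    (hR : R ∈ Aset (n + 2) ∪ Bset (n + 2)) (ht : t <:+ P) (ht' : t' <+: R) (hne : t ≠ [])
    (hlen : t.length + t'.length ≤ Nat.fib (2 * n)) :
    t ++ c ++ t' ∈ Factors (Aset (n + 3)) := by
  have hmono : Nat.fib (2 * n) ≤ Nat.fib (2 * n + 1) := Nat.fib_mono (by omega)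
  have hpos : 0 < t.length := length_pos_iff.2 hne
  obtain ⟨l, w, hw, htw⟩ := exists_block_suffix hP ht (by omega)
  obtain ⟨a, ha, ht'a⟩ := exists_prefix_Aset_of_mem_union hR ht' (by omega)
  have hx := htw.append_infix (m := c) ht'a
  rcases mem_Bset_add_two.1 hc with ⟨a₁, ha₁, c₁, hc₁, rfl⟩ | ⟨c₁, hc₁, a₁, ha₁, rfl⟩
  · exact mem_factors_Aset_of_isInflation [l, .a, .b, .a] (by cases l <;> decide)
      (.cons hw <| .cons ha₁ <| .cons hc₁ <| .cons ha .nil) (by simpa using hx)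
  · exact mem_factors_Aset_of_isInflation [l, .b, .a, .a] (by cases l <;> decide)
      (.cons hw <| .cons hc₁ <| .cons ha₁ <| .cons ha .nil) (by simpa using hx)

lemma suffix_append_Aset_append_prefix_mem_factors {a₁ a₂ a₃ t t' : Word}
    (ha₁ : a₁ ∈ Aset (n + 1)) (ha₂ : a₂ ∈ Aset (n + 1)) (ha₃ : a₃ ∈ Aset (n + 1))
    (ht : t <:+ a₁) (ht' : t' <+: a₃) (hlen : t.length + t'.length ≤ Nat.fib (2 * n + 2)) :
    t ++ a₂ ++ t' ∈ Factors (Aset (n + 3)) := by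
  have : Nat.fib (2 * n + 2) = Nat.fib (2 * n) + Nat.fib (2 * n + 1) := Nat.fib_add_two
  by_cases hshort : t.length ≤ Nat.fib (2 * n)
  · obtain ⟨c, hc, htc⟩ := exists_suffix_Bset_of_Aset ha₁ ht hshort
    exact mem_factors_Aset_of_isInflation [.b, .a, .a] (by decide)
      (.cons hc <| .cons ha₂ <| .cons ha₃ .nil) (by simpa using htc.append_infix (m := a₂) ht')
  · obtain ⟨c, hc, ht'c⟩ := exists_prefix_Bset_of_Aset ha₃ ht' (by omega)
    exact mem_factors_Aset_of_isInflation [.a, .a, .b] (by decide)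
      (.cons ha₁ <| .cons ha₂ <| .cons hc .nil) (by simpa using ht.append_infix (m := a₂) ht'c)

lemma mem_factors_of_infix_Aset_append_Bset {a c x : Word} (ha : a ∈ Aset (n + 2))
    (hc : c ∈ Bset (n + 2)) (hx : x <:+: a ++ c) (hlen : x.length ≤ 2 * Nat.fib (2 * n + 2)) :
    x ∈ Factors (Aset (n + 3)) := by
  obtain ⟨c₁, hc₁, a₁, ha₁, a₂, ha₂, rfl⟩ := mem_Aset_add_two.1 ha
  rcases mem_Bset_add_two.1 hc with ⟨a₃, ha₃, c₃, hc₃, rfl⟩ | ⟨c₃, hc₃, a₃, ha₃, rfl⟩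
  · have hx' : x <:+: c₁ ++ a₁ ++ (a₂ ++ (a₃ ++ c₃)) := by simpa using hx
    rcases infix_append_iff_ne_nil.1 hx' with hx | hx | ⟨t, t', -, -, rfl, ht, ht'⟩
    · exact mem_factors_Aset_of_isInflation [.b, .a] (by decide)
        (.cons hc₁ <| .cons ha₁ .nil) (by simpa using hx)
    · exact mem_factors_Aset_of_isInflation [.a, .a, .b] (by decide)
        (.cons ha₂ <| .cons ha₃ <| .cons hc₃ .nil) (by simpa using hx)
    by_cases hshort : t'.length ≤ a₂.length
    · have := ht.append_infix (m := [])
        (prefix_of_prefix_length_le ht' (prefix_append _ _) hshort)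
      exact mem_factors_Aset_of_isInflation [.b, .a, .a] (by decide)
        (.cons hc₁ <| .cons ha₁ <| .cons ha₂ .nil) (by simpa using this)
    obtain ⟨t'', rfl, ht''⟩ := exists_eq_append_of_prefix_append ht' (by omega)
    simp only [length_append, length_of_mem_Aset ha₂] at hlen
    have ht₁ : t <:+ a₁ := suffix_of_suffix_length_le ht (suffix_append _ _)
      (by rw [length_of_mem_Aset ha₁]; omega)
    have ht''₃ : t'' <+: a₃ := prefix_of_prefix_length_le ht'' (prefix_append _ _)
      (by rw [length_of_mem_Aset ha₃]; omega)
    simpa using suffix_append_Aset_append_prefix_mem_factors ha₁ ha₂ ha₃ ht₁ ht''₃ (by omega)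
  · exact mem_factors_Aset_of_isInflation [.b, .a, .a, .b, .a] (by decide)
      (.cons hc₁ <| .cons ha₁ <| .cons ha₂ <| .cons hc₃ <| .cons ha₃ .nil) (by simpa using hx)

lemma mem_factors_of_infix_Bset_append_Bset {c c' x : Word} (hc : c ∈ Bset (n + 2))
    (hc' : c' ∈ Bset (n + 2)) (hx : x <:+: c ++ c') (hlen : x.length ≤ 2 * Nat.fib (2 * n + 2)) :
    x ∈ Factors (Aset (n + 3)) := by
  rcases mem_Bset_add_two.1 hc with ⟨a₁, ha₁, c₁, hc₁, rfl⟩ | ⟨c₁, hc₁, a₁, ha₁, rfl⟩ <;>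
    rcases mem_Bset_add_two.1 hc' with ⟨a₂, ha₂, c₂, hc₂, rfl⟩ | ⟨c₂, hc₂, a₂, ha₂, rfl⟩
  · have hx' : x <:+: a₁ ++ (c₁ ++ a₂ ++ c₂) := by simpa using hx
    rcases infix_append_iff_ne_nil.1 hx' with hx | hx | ⟨t, t', htne, -, rfl, ht, ht'⟩
    · exact mem_factors_Aset_of_isInflation [.a] (by decide) (.cons ha₁ .nil) (by simpa using hx)
    · exact mem_factors_Aset_of_isInflation [.b, .a, .b] (by decide)
        (.cons hc₁ <| .cons ha₂ <| .cons hc₂ .nil) (by simpa using hx)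
    by_cases hshort : t'.length ≤ (c₁ ++ a₂).length
    · have := ht.append_infix (m := [])
        (prefix_of_prefix_length_le ht' (prefix_append _ _) hshort)
      exact mem_factors_Aset_of_isInflation [.a, .b, .a] (by decide)
        (.cons ha₁ <| .cons hc₁ <| .cons ha₂ .nil) (by simpa using this)
    obtain ⟨t'', rfl, ht''⟩ := exists_eq_append_of_prefix_append ht' (by omega)
    have hfib : Nat.fib (2 * n + 2) = Nat.fib (2 * n) + Nat.fib (2 * n + 1) := Nat.fib_add_two
    have hpos : 0 < t.length := length_pos_iff.2 htne
    simp only [length_append, length_of_mem_Aset ha₂, length_of_mem_Bset hc₁] at hlen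
    obtain ⟨a, ha, ht''a⟩ := exists_prefix_Aset_of_Bset hc₂ ht'' (by omega)
    exact mem_factors_Aset_of_isInflation [.a, .b, .a, .a] (by decide)
      (.cons ha₁ <| .cons hc₁ <| .cons ha₂ <| .cons ha .nil)
      (by simpa using ht.append_infix (m := c₁ ++ a₂) ht''a)
  · exact mem_factors_Aset_of_isInflation [.a, .b, .b, .a] (by decide)
      (.cons ha₁ <| .cons hc₁ <| .cons hc₂ <| .cons ha₂ .nil) (by simpa using hx)
  · exact mem_factors_Aset_of_isInflation [.b, .a, .a, .b] (by decide)
      (.cons hc₁ <| .cons ha₁ <| .cons ha₂ <| .cons hc₂ .nil) (by simpa using hx)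
  · exact mem_factors_Aset_of_isInflation [.b, .a, .b, .a] (by decide)
      (.cons hc₁ <| .cons ha₁ <| .cons hc₂ <| .cons ha₂ .nil) (by simpa using hx)

lemma suffix_append_prefix_mem_factors {P c v t t' : Word}
    (hP : P ∈ Aset (n + 2) ∪ Bset (n + 2)) (hc : c ∈ Bset (n + 2)) (hv : v ∈ Aset (n + 2))
    (ht : t <:+ P) (ht' : t' <+: c ++ v) (hne : t ≠ [])
    (hlen : t.length + t'.length ≤ 2 * Nat.fib (2 * n + 2)) :
    t ++ t' ∈ Factors (Aset (n + 3)) := by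
  by_cases hshort : t'.length ≤ c.length
  · have hx := ht.append_infix (m := [])
      (prefix_of_prefix_length_le ht' (prefix_append _ _) hshort)
    rw [append_nil, append_nil] at hx
    rcases hP with hP | hP
    · exact mem_factors_of_infix_Aset_append_Bset hP hc hx (by simpa using hlen)
    · exact mem_factors_of_infix_Bset_append_Bset hP hc hx (by simpa using hlen)
  obtain ⟨t'', rfl, ht''⟩ := exists_eq_append_of_prefix_append ht' (by omega)
  have hfib : Nat.fib (2 * n + 2) = Nat.fib (2 * n) + Nat.fib (2 * n + 1) := Nat.fib_add_two
  simp only [length_append, length_of_mem_Bset_add_two hc] at hlen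
  simpa using suffix_append_Bset_append_prefix_mem_factors hP hc (Or.inl hv) ht ht'' hne
    (by omega)

lemma mem_factors_of_infix_Aset_append_Aset {u₁ u₂ x : Word} (hu₁ : u₁ ∈ Aset (n + 3))
    (hu₂ : u₂ ∈ Aset (n + 3)) (hx : x <:+: u₁ ++ u₂)
    (hlen : x.length ≤ 2 * Nat.fib (2 * n + 2)) : x ∈ Factors (Aset (n + 3)) := by
  rcases infix_append_iff_ne_nil.1 hx with hx | hx | ⟨t, t', htne, -, rfl, ht, ht'⟩
  · exact ⟨u₁, hu₁, hx⟩
  · exact ⟨u₂, hu₂, hx⟩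
  obtain ⟨c₁, hc₁, a₁, ha₁, a₂, ha₂, rfl⟩ := mem_Aset_add_two.1 hu₁
  obtain ⟨c₂, hc₂, a₃, ha₃, a₄, ha₄, rfl⟩ := mem_Aset_add_two.1 hu₂
  rw [length_append] at hlen
  rw [← append_assoc] at ht ht'
  refine suffix_append_prefix_mem_factors (Or.inl ha₂) hc₂ ha₃
    (suffix_of_suffix_length_le ht (suffix_append _ _) ?_)
    (prefix_of_prefix_length_le ht' (prefix_append _ _) ?_) htne hlen
  · rw [length_of_mem_Aset_add_two ha₂]
    omega
  · rw [length_append, length_of_mem_Aset_add_two ha₃, length_of_mem_Bset_add_two hc₂]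
    omega

lemma suffix_append_prefix_mem_factors_of_Bset_add_three {Y c a t t' : Word}
    (hY : Y ∈ Bset (n + 3)) (hc : c ∈ Bset (n + 2)) (ha : a ∈ Aset (n + 2)) (ht : t <:+ Y)
    (ht' : t' <+: c ++ a) (hne : t ≠ [])
    (hlen : t.length + t'.length ≤ 2 * Nat.fib (2 * n + 2)) :
    t ++ t' ∈ Factors (Aset (n + 3)) := by
  have hfib : Nat.fib (2 * n + 2) = Nat.fib (2 * n) + Nat.fib (2 * n + 1) := Nat.fib_add_two
  rcases mem_Bset_add_two.1 hY with ⟨aY, haY, cY, hcY, rfl⟩ | ⟨cY, hcY, aY, haY, rfl⟩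
  · by_cases hshort : t.length ≤ cY.length
    · exact suffix_append_prefix_mem_factors (Or.inr hcY) hc ha
        (suffix_of_suffix_length_le ht (suffix_append _ _) hshort) ht' hne hlen
    obtain ⟨t₀, rfl, ht₀⟩ := exists_eq_append_of_suffix_append ht (by omega)
    have ht₀ne : t₀ ≠ [] := by
      rintro rfl
      simp at hshort
    rw [length_append, length_of_mem_Bset_add_two hcY] at hlen
    have ht'c : t' <+: c := prefix_of_prefix_length_le ht' (prefix_append _ _)
      (by rw [length_of_mem_Bset_add_two hc]; omega)
    exact suffix_append_Bset_append_prefix_mem_factors (Or.inl haY) hcY (Or.inr hc) ht₀ ht'c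
      ht₀ne (by omega)
  · exact suffix_append_prefix_mem_factors (Or.inl haY) hc ha
      (suffix_of_suffix_length_le ht (suffix_append _ _)
        (by rw [length_of_mem_Aset_add_two haY]; omega)) ht' hne hlen

lemma mem_factors_Aset_add_three_of_infix_Aset_add_four {w x : Word} (hw : w ∈ Aset (n + 4))
    (hx : x <:+: w) (hlen : x.length ≤ 2 * Nat.fib (2 * n + 2)) :
    x ∈ Factors (Aset (n + 3)) := by
  obtain ⟨Y, hY, u₁, hu₁, u₂, hu₂, rfl⟩ := mem_Aset_add_two.1 hw
  rcases infix_append_iff_ne_nil.1 hx with hx | hx | ⟨t, t', htne, -, rfl, ht, ht'⟩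
  · rcases mem_Bset_add_two.1 hY with ⟨aY, haY, cY, hcY, rfl⟩ | ⟨cY, hcY, aY, haY, rfl⟩
    · exact mem_factors_of_infix_Aset_append_Bset haY hcY hx hlen
    · exact ⟨_, append_mem_Aset hcY haY haY, hx.trans ⟨[], aY, by simp⟩⟩
  · exact mem_factors_of_infix_Aset_append_Aset hu₁ hu₂ hx hlen
  · obtain ⟨c₁, hc₁, a₁, ha₁, a₂, ha₂, rfl⟩ := mem_Aset_add_two.1 hu₁
    rw [length_append] at hlen
    refine suffix_append_prefix_mem_factors_of_Bset_add_three hY hc₁ ha₁ ht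
      (prefix_of_prefix_length_le ht' ⟨a₂ ++ u₂, by simp⟩ ?_) htne hlen
    rw [length_append, length_of_mem_Aset_add_two ha₁, length_of_mem_Bset_add_two hc₁]
    omega

end ShortFactors

theorem factors_Aset_succ_eq (n : ℕ) (hn : 2 ≤ n) :
    FactorSet (Aset (n + 1)) (Nat.fib (2 * n) - Nat.fib (2 * n - 3)) =
      FactorSet (Aset (n + 2)) (Nat.fib (2 * n) - Nat.fib (2 * n - 3)) := by
  obtain ⟨k, rfl⟩ : ∃ k, n = k + 2 := ⟨n - 2, by omega⟩
  have hm : Nat.fib (2 * (k + 2)) - Nat.fib (2 * (k + 2) - 3) = 2 * Nat.fib (2 * k + 2) := by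
    have h₃ : Nat.fib (2 * k + 3) = Nat.fib (2 * k + 1) + Nat.fib (2 * k + 2) := Nat.fib_add_two
    have h₄ : Nat.fib (2 * k + 4) = Nat.fib (2 * k + 2) + Nat.fib (2 * k + 3) := Nat.fib_add_two
    rw [show 2 * (k + 2) = 2 * k + 4 by ring, show 2 * k + 4 - 3 = 2 * k + 1 by omega]
    omega
  rw [hm, factorSet_eq, factorSet_eq]
  ext x
  refine ⟨fun ⟨hx, hxA⟩ => ⟨hx, factors_Aset_subset_succ _ hxA⟩, fun ⟨hx, w, hw, hxw⟩ => ⟨hx, ?_⟩⟩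
  exact mem_factors_Aset_add_three_of_infix_Aset_add_four hw hxw hx.le
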